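/- In the linear cell-kill special case (β = 0, toxicity measured by physical dose), the problem min ∑_{t=0}^{N} w_t exp(−ξα·∑_{k=1}^{t} d_k) subject to ∑_{t=1}^{N} d_t ≤ D_max and 0 ≤ d_t ≤ d_max (with 0 < D_max < N·d_max, α > 0, ξ > 0, w_t > 0) is solved by the front-loaded schedule d*_t = d_max for t = 1,…,k, d*_{k+1} = D_max − k·d_max, d*_t = 0 for t ≥ k+2, where k = ⌊D_max/d_max⌋. -/

import Mathlib

open Finset Real

/-!
The objective `∑ₜ wₜ exp(-ξα Sₜ)` depends on a schedule `d` only through its partial sums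
`Sₜ = d₀ + ⋯ + d_{t-1}`, and is nonincreasing in each of them. Every feasible schedule has
`Sₜ ≤ min (t · dmax) Dmax`, and the front-loaded schedule is exactly the sequence of increments of
`t ↦ min (t · dmax) Dmax`, so it attains all these bounds at once.
-/

noncomputable def frontLoaded (dmax Dmax : ℝ) (s : ℕ) : ℝ :=
  if s < ⌊Dmax / dmax⌋₊ then dmax
  else if s = ⌊Dmax / dmax⌋₊ then Dmax - ⌊Dmax / dmax⌋₊ * dmax
  else 0

section FrontLoaded

variable {dmax Dmax : ℝ}

lemma frontLoaded_eq_sub (hdmax : 0 < dmax) (hD : 0 ≤ Dmax) (s : ℕ) :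
    frontLoaded dmax Dmax s = min ((s + 1) * dmax) Dmax - min (s * dmax) Dmax := by
  set k := ⌊Dmax / dmax⌋₊
  have hk_le : k * dmax ≤ Dmax := (le_div_iff₀ hdmax).mp (Nat.floor_le (by positivity))
  have hk_lt : Dmax < (k + 1) * dmax := (div_lt_iff₀ hdmax).mp (Nat.lt_floor_add_one _)
  unfold frontLoaded
  rcases lt_trichotomy s k with h | rfl | h
  · have hs : (s + 1 : ℝ) ≤ k := by exact_mod_cast h
    rw [if_pos h, min_eq_left (by nlinarith), min_eq_left (by nlinarith)]
    ring
  · rw [if_neg (lt_irrefl _), if_pos rfl, min_eq_left hk_le, min_eq_right hk_lt.le]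
  · have hs : (k + 1 : ℝ) ≤ s := by exact_mod_cast h
    rw [if_neg (by omega), if_neg (by omega), min_eq_right (by nlinarith),
      min_eq_right (by nlinarith), sub_self]

lemma sum_range_frontLoaded (hdmax : 0 < dmax) (hD : 0 ≤ Dmax) (t : ℕ) :
    ∑ s ∈ range t, frontLoaded dmax Dmax s = min (t * dmax) Dmax := by
  have := sum_range_sub (fun s : ℕ => min ((s : ℝ) * dmax) Dmax) t
  simp only [Nat.cast_succ, Nat.cast_zero, zero_mul, min_eq_left hD, sub_zero] at this
  simpa only [frontLoaded_eq_sub hdmax hD] using this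

lemma frontLoaded_nonneg (hdmax : 0 < dmax) (hD : 0 ≤ Dmax) (s : ℕ) :
    0 ≤ frontLoaded dmax Dmax s := by
  rw [frontLoaded_eq_sub hdmax hD, sub_nonneg]
  gcongr
  linarith

lemma frontLoaded_le (hdmax : 0 < dmax) (hD : 0 ≤ Dmax) (s : ℕ) :
    frontLoaded dmax Dmax s ≤ dmax := by
  rw [frontLoaded_eq_sub hdmax hD, sub_le_iff_le_add, add_comm dmax, ← min_add_add_right]
  exact min_le_min (by linarith) (by linarith)

end FrontLoaded

lemma sum_range_le_min_of_feasible {N t : ℕ} {d : ℕ → ℝ} {dmax Dmax : ℝ} (ht : t ≤ N)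
    (hd : ∀ s, s < N → 0 ≤ d s ∧ d s ≤ dmax) (hsum : ∑ s ∈ range N, d s ≤ Dmax) :
    ∑ s ∈ range t, d s ≤ min (t * dmax) Dmax := by
  refine le_min ?_ ?_
  · calc ∑ s ∈ range t, d s ≤ ∑ _s ∈ range t, dmax :=
          sum_le_sum fun s hs => (hd s ((mem_range.mp hs).trans_le ht)).2
      _ = t * dmax := by rw [sum_const, card_range, nsmul_eq_mul]
  · calc ∑ s ∈ range t, d s ≤ ∑ s ∈ range N, d s :=
          sum_le_sum_of_subset_of_nonneg (range_subset_range.mpr ht)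
            fun s hs _ => (hd s (mem_range.mp hs)).1
      _ ≤ Dmax := hsum

lemma sum_mul_exp_neg_mul_le {ι : Type*} (I : Finset ι) {w S T : ι → ℝ} {c : ℝ}
    (hw : ∀ i ∈ I, 0 ≤ w i) (hc : 0 ≤ c) (hST : ∀ i ∈ I, S i ≤ T i) :
    ∑ i ∈ I, w i * exp (-c * T i) ≤ ∑ i ∈ I, w i * exp (-c * S i) := by
  refine sum_le_sum fun i hi => mul_le_mul_of_nonneg_left (exp_le_exp.mpr ?_) (hw i hi)
  have := mul_le_mul_of_nonneg_left (hST i hi) hc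
  linarith

theorem front_loaded_optimal_linear_cell_kill_general
    (N : ℕ) (w : ℕ → ℝ) (hw : ∀ t, t ≤ N → 0 < w t)
    (α ξ dmax Dmax : ℝ) (hα : 0 < α) (hξ : 0 < ξ)
    (hdmax : 0 < dmax) (hD0 : 0 < Dmax) :
    ((∀ s, s < N → 0 ≤ (fun s => if s < ⌊Dmax / dmax⌋₊ then dmax
        else if s = ⌊Dmax / dmax⌋₊ then Dmax - ⌊Dmax / dmax⌋₊ * dmax
        else 0) s ∧
      (fun s => if s < ⌊Dmax / dmax⌋₊ then dmax
        else if s = ⌊Dmax / dmax⌋₊ then Dmax - ⌊Dmax / dmax⌋₊ * dmax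
        else 0) s ≤ dmax) ∧
      ∑ s ∈ Finset.range N,
        (fun s => if s < ⌊Dmax / dmax⌋₊ then dmax
          else if s = ⌊Dmax / dmax⌋₊ then Dmax - ⌊Dmax / dmax⌋₊ * dmax
          else 0) s ≤ Dmax) ∧
    ∀ d : ℕ → ℝ,
      (∀ s, s < N → 0 ≤ d s ∧ d s ≤ dmax) →
      (∑ s ∈ Finset.range N, d s ≤ Dmax) →
      ∑ t ∈ Finset.range (N + 1), w t *
          Real.exp (-(ξ * α) * ∑ k ∈ Finset.range t,
            (fun s => if s < ⌊Dmax / dmax⌋₊ then dmax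
              else if s = ⌊Dmax / dmax⌋₊ then Dmax - ⌊Dmax / dmax⌋₊ * dmax
              else 0) k) ≤
        ∑ t ∈ Finset.range (N + 1), w t *
          Real.exp (-(ξ * α) * ∑ k ∈ Finset.range t, d k) := by
  have hpartial := sum_range_frontLoaded hdmax hD0.le
  refine ⟨⟨fun s _ => ⟨frontLoaded_nonneg hdmax hD0.le s, frontLoaded_le hdmax hD0.le s⟩,
    (hpartial N).trans_le (min_le_right _ _)⟩, fun d hd hsum => ?_⟩
  refine sum_mul_exp_neg_mul_le _ (fun t ht => (hw t (Nat.lt_succ_iff.mp (mem_range.mp ht))).le)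
    (mul_pos hξ hα).le fun t ht => ?_
  exact (sum_range_le_min_of_feasible (Nat.lt_succ_iff.mp (mem_range.mp ht)) hd hsum).trans
    (hpartial t).ge

/-- Proposition of Section 3: with linear cell-kill and physical-dose
constraints, the front-loaded hypo-fractionated schedule is optimal. -/
theorem front_loaded_optimal_linear_cell_kill
    (N : ℕ) (w : ℕ → ℝ) (hw : ∀ t, t ≤ N → 0 < w t)
    (α ξ dmax Dmax : ℝ) (hα : 0 < α) (hξ : 0 < ξ)
    (hdmax : 0 < dmax) (hD0 : 0 < Dmax) (hDN : Dmax < N * dmax) :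
    ((∀ s, s < N → 0 ≤ (fun s => if s < ⌊Dmax / dmax⌋₊ then dmax
        else if s = ⌊Dmax / dmax⌋₊ then Dmax - ⌊Dmax / dmax⌋₊ * dmax
        else 0) s ∧
      (fun s => if s < ⌊Dmax / dmax⌋₊ then dmax
        else if s = ⌊Dmax / dmax⌋₊ then Dmax - ⌊Dmax / dmax⌋₊ * dmax
        else 0) s ≤ dmax) ∧
      ∑ s ∈ Finset.range N,
        (fun s => if s < ⌊Dmax / dmax⌋₊ then dmax
          else if s = ⌊Dmax / dmax⌋₊ then Dmax - ⌊Dmax / dmax⌋₊ * dmax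
          else 0) s ≤ Dmax) ∧
    ∀ d : ℕ → ℝ,
      (∀ s, s < N → 0 ≤ d s ∧ d s ≤ dmax) →
      (∑ s ∈ Finset.range N, d s ≤ Dmax) →
      ∑ t ∈ Finset.range (N + 1), w t *
          Real.exp (-(ξ * α) * ∑ k ∈ Finset.range t,
            (fun s => if s < ⌊Dmax / dmax⌋₊ then dmax
              else if s = ⌊Dmax / dmax⌋₊ then Dmax - ⌊Dmax / dmax⌋₊ * dmax
              else 0) k) ≤
        ∑ t ∈ Finset.range (N + 1), w t *
          Real.exp (-(ξ * α) * ∑ k ∈ Finset.range t, d k) :=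
  front_loaded_optimal_linear_cell_kill_general N w hw α ξ dmax Dmax hα hξ hdmax hD0
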